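/- arXiv:1010.0661 — 2 statements merged into one kernel-verified Lean document; each statement's English description precedes it below -/
import Mathlib

section
/- With U, Φ, φ and D₁ as above, if ρ : V → U is a C¹ diffeomorphism of an open set V ⊂ ℝ^{d+1} onto U, then D₁[Φ∘ρ](y) = det(∂ρ/∂y)(y) · (D₁Φ)(ρ(y)) for all y ∈ V, where Φ∘ρ is paired with φ∘ρ in the definition of D₁. -/
/-!
`D1` is the determinant of the bordered matrix `[[0, Dφ], [z, DΦ]]`. By the chain rule the
Jacobians of `φ ∘ ρ` and `Φ ∘ ρ` at `y` are those of `φ` and `Φ` at `ρ y` multiplied on the right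
by `Dρ(y)`, so the bordered matrix of the pulled-back data is the original one times
`diag(1, Dρ(y))`, and the identity follows from multiplicativity of the determinant.
-/

/-- `⟨D₁Φ(y), z⟩ = det [[0, ∂φ(y)],[z, ∂Φ(y)]]`. -/
noncomputable def D1 {N n m : ℕ} (h : m + n = N + 1)
    (Φ : (Fin N → ℝ) → Fin n → ℝ) (φ : (Fin N → ℝ) → Fin m → ℝ)
    (y : Fin N → ℝ) (z : Fin n → ℝ) : ℝ :=
  Matrix.det (Matrix.of fun (r c : Fin (N + 1)) =>
    Fin.addCases (motive := fun _ => ℝ)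
      (fun i : Fin m =>
        Fin.cases (0 : ℝ)
          (fun j : Fin N => fderiv ℝ (fun y' => φ y' i) y (Pi.single j 1)) c)
      (fun i : Fin n =>
        Fin.cases (z i)
          (fun j : Fin N => fderiv ℝ (fun y' => Φ y' i) y (Pi.single j 1)) c)
      (Fin.cast h.symm r))

section Jacobian

variable {𝕜 : Type*} [NontriviallyNormedField 𝕜] {N n : ℕ}

noncomputable def jacobianMatrix (f : (Fin N → 𝕜) → Fin n → 𝕜) (y : Fin N → 𝕜) :
    Matrix (Fin n) (Fin N) 𝕜 :=
  Matrix.of fun i j => fderiv 𝕜 (fun y' => f y' i) y (Pi.single j 1)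

theorem jacobianMatrix_eq_toMatrix' {f : (Fin N → 𝕜) → Fin n → 𝕜} {y : Fin N → 𝕜}
    (hf : DifferentiableAt 𝕜 f y) :
    jacobianMatrix f y = LinearMap.toMatrix' (fderiv 𝕜 f y : (Fin N → 𝕜) →ₗ[𝕜] Fin n → 𝕜) := by
  ext i j
  simp [jacobianMatrix, LinearMap.toMatrix'_apply, fderiv_apply hf]

theorem jacobianMatrix_comp {k : ℕ} {f : (Fin k → 𝕜) → Fin n → 𝕜} {ρ : (Fin N → 𝕜) → Fin k → 𝕜}
    {y : Fin N → 𝕜} (hf : DifferentiableAt 𝕜 f (ρ y)) (hρ : DifferentiableAt 𝕜 ρ y) :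
    jacobianMatrix (f ∘ ρ) y = jacobianMatrix f (ρ y) * jacobianMatrix ρ y := by
  rw [jacobianMatrix_eq_toMatrix' (hf.comp y hρ), jacobianMatrix_eq_toMatrix' hf,
    jacobianMatrix_eq_toMatrix' hρ, fderiv_comp y hf hρ, ContinuousLinearMap.toLinearMap_comp,
    LinearMap.toMatrix'_comp]

end Jacobian

section Bordered

variable {R : Type*} [CommRing R] {N n m : ℕ}

/-- The matrix `[[0, A], [z, B]]`, with its rows split as `m + n`. -/
def borderedMatrix (h : m + n = N + 1) (z : Fin n → R) (A : Matrix (Fin m) (Fin N) R)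
    (B : Matrix (Fin n) (Fin N) R) : Matrix (Fin (N + 1)) (Fin (N + 1)) R :=
  Matrix.of fun r c =>
    Fin.addCases (motive := fun _ => R)
      (fun i => Fin.cases 0 (A i) c) (fun i => Fin.cases (z i) (B i) c) (Fin.cast h.symm r)

/-- The block matrix `diag(1, J)`. -/
def oneBlockDiagonal (J : Matrix (Fin N) (Fin N) R) : Matrix (Fin (N + 1)) (Fin (N + 1)) R :=
  Matrix.of (Fin.cons (Fin.cons 1 0) fun k => Fin.cons 0 (J k))

theorem det_oneBlockDiagonal (J : Matrix (Fin N) (Fin N) R) :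
    (oneBlockDiagonal J).det = J.det := by
  have hminor : (oneBlockDiagonal J).submatrix Fin.succ Fin.succ = J := rfl
  rw [Matrix.det_succ_column_zero, Fin.sum_univ_succ, Fin.succAbove_zero, hminor]
  simp [oneBlockDiagonal]

theorem borderedMatrix_mul_oneBlockDiagonal (h : m + n = N + 1) (z : Fin n → R)
    (A : Matrix (Fin m) (Fin N) R) (B : Matrix (Fin n) (Fin N) R) (J : Matrix (Fin N) (Fin N) R) :
    borderedMatrix h z A B * oneBlockDiagonal J = borderedMatrix h z (A * J) (B * J) := by
  ext r c
  simp only [borderedMatrix, Matrix.mul_apply, Matrix.of_apply]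
  induction Fin.cast h.symm r using Fin.addCases <;>
  induction c using Fin.cases <;>
  simp [Fin.sum_univ_succ, oneBlockDiagonal, Matrix.mul_apply]

end Bordered

theorem D1_eq_det_borderedMatrix {N n m : ℕ} (h : m + n = N + 1)
    (Φ : (Fin N → ℝ) → Fin n → ℝ) (φ : (Fin N → ℝ) → Fin m → ℝ) (y : Fin N → ℝ)
    (z : Fin n → ℝ) :
    D1 h Φ φ y z = (borderedMatrix h z (jacobianMatrix φ y) (jacobianMatrix Φ y)).det :=
  rfl

theorem stmt_5_general (d n m : ℕ) (h : m + n = (d + 1) + 1)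
    (U V : Set (Fin (d + 1) → ℝ))
    (Φ : (Fin (d + 1) → ℝ) → Fin n → ℝ) (φ : (Fin (d + 1) → ℝ) → Fin m → ℝ)
    (ρ : (Fin (d + 1) → ℝ) → (Fin (d + 1) → ℝ))
    (hρmaps : Set.MapsTo ρ V U)
    (hρ : ∀ y ∈ V, ∀ i, DifferentiableAt ℝ (fun y' => ρ y' i) y)
    (hΦ : ∀ u ∈ U, ∀ i, DifferentiableAt ℝ (fun y' => Φ y' i) u)
    (hφ : ∀ u ∈ U, ∀ i, DifferentiableAt ℝ (fun y' => φ y' i) u)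
    (y : Fin (d + 1) → ℝ) (hy : y ∈ V) (z : Fin n → ℝ) :
    D1 h (Φ ∘ ρ) (φ ∘ ρ) y z =
      Matrix.det (Matrix.of fun i j => fderiv ℝ (fun y' => ρ y' i) y (Pi.single j 1)) *
        D1 h Φ φ (ρ y) z := by
  have hρy : DifferentiableAt ℝ ρ y := differentiableAt_pi.mpr (hρ y hy)
  have hΦρy : DifferentiableAt ℝ Φ (ρ y) := differentiableAt_pi.mpr (hΦ _ (hρmaps hy))
  have hφρy : DifferentiableAt ℝ φ (ρ y) := differentiableAt_pi.mpr (hφ _ (hρmaps hy))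
  rw [D1_eq_det_borderedMatrix, D1_eq_det_borderedMatrix, jacobianMatrix_comp hΦρy hρy,
    jacobianMatrix_comp hφρy hρy, ← borderedMatrix_mul_oneBlockDiagonal, Matrix.det_mul,
    det_oneBlockDiagonal]
  exact mul_comm _ _

/-- If `ρ : V → U` is a `C¹` diffeomorphism, then
`D₁[Φ∘ρ](y) = det(∂ρ/∂y)(y) · (D₁Φ)(ρ(y))`, where on the left `D₁` is computed from the
data `(Φ∘ρ, φ∘ρ)`. -/
theorem stmt_5 (d n m : ℕ) (h : m + n = (d + 1) + 1)
    (U V : Set (Fin (d + 1) → ℝ)) (hU : IsOpen U) (hV : IsOpen V)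
    (Φ : (Fin (d + 1) → ℝ) → Fin n → ℝ) (φ : (Fin (d + 1) → ℝ) → Fin m → ℝ)
    (ρ : (Fin (d + 1) → ℝ) → (Fin (d + 1) → ℝ))
    (hρmaps : Set.MapsTo ρ V U) (hρinj : Set.InjOn ρ V) (hρsurj : ρ '' V = U)
    (hρ : ∀ y ∈ V, ∀ i, DifferentiableAt ℝ (fun y' => ρ y' i) y)
    (hΦ : ∀ u ∈ U, ∀ i, DifferentiableAt ℝ (fun y' => Φ y' i) u)
    (hφ : ∀ u ∈ U, ∀ i, DifferentiableAt ℝ (fun y' => φ y' i) u)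
    (y : Fin (d + 1) → ℝ) (hy : y ∈ V) (z : Fin n → ℝ) :
    D1 h (Φ ∘ ρ) (φ ∘ ρ) y z =
      Matrix.det (Matrix.of fun i j => fderiv ℝ (fun y' => ρ y' i) y (Pi.single j 1)) *
        D1 h Φ φ (ρ y) z :=
  stmt_5_general d n m h U V Φ φ ρ hρmaps hρ hΦ hφ y hy z
end

section
/- Let Φ : U → ℝⁿ and φ : U → ℝ^{d−n+1} be C² on open U ⊂ ℝ^d, let Y be a C¹ vector field on U with Y φ_j = 0 for all j = 1,…,d−n+1, and define DΦ as the z-linear functional ⟨DΦ, z⟩ := det [[0, 0, ∂_yφ],[z, Φ, ∂_yΦ]]. Then ⟨Y(DΦ)(y), Φ(y)⟩ = 0 for all y ∈ U, where Y(DΦ) denotes the derivative of the functional-valued map y ↦ DΦ(y) along Y. -/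
/-- `⟨DΦ(y), z⟩ := det [[0, 0, ∂φ(y)],[z, Φ(y), ∂Φ(y)]]`. -/
noncomputable def Dop {d n m : ℕ} (h : m + n = d + 2)
    (Φ : (Fin d → ℝ) → Fin n → ℝ) (φ : (Fin d → ℝ) → Fin m → ℝ)
    (y : Fin d → ℝ) (z : Fin n → ℝ) : ℝ :=
  Matrix.det (Matrix.of fun (r c : Fin (d + 2)) =>
    Fin.addCases (motive := fun _ => ℝ)
      (fun i : Fin m =>
        Fin.cases (0 : ℝ)
          (fun c' : Fin (d + 1) =>
            Fin.cases (0 : ℝ)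
              (fun j : Fin d => fderiv ℝ (fun y' => φ y' i) y (Pi.single j 1)) c') c)
      (fun i : Fin n =>
        Fin.cases (z i)
          (fun c' : Fin (d + 1) =>
            Fin.cases (Φ y i)
              (fun j : Fin d => fderiv ℝ (fun y' => Φ y' i) y (Pi.single j 1)) c') c)
      (Fin.cast h.symm r))

/-!
Write `⟨DΦ(y), z⟩` as the determinant of the matrix with columns `(0; z)`, `(0; Φ(y))` and
`(∂_jφ(y); ∂_jΦ(y))`, and differentiate in `y` with `z = Φ(y₀)` frozen. By the Leibniz rule for
the determinant the derivative along `Y` is a sum of determinants in which one column is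
differentiated. The `z`-column is constant. The derivative of the `Φ`-column along `Y` is
`∑ j, Y_j (0; ∂_jΦ)`, which equals the combination `∑ j, Y_j (∂_jφ; ∂_jΦ)` of the other columns
because `Y φ = 0`. In every remaining term the first two columns both equal `(0; Φ(y₀))`.
-/

open Matrix

noncomputable def Matrix.detRowContinuousMultilinear {ι R : Type*} [Fintype ι] [DecidableEq ι]
    [CommRing R] [TopologicalSpace R] [IsTopologicalRing R] :
    ContinuousMultilinearMap R (fun _ : ι => ι → R) R :=
  { (detRowAlternating : (ι → R) [⋀^ι]→ₗ[R] R).toMultilinearMap with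
    cont := continuous_id.matrix_det }

theorem fderiv_matrix_det_apply {𝕜 ι E : Type*} [NontriviallyNormedField 𝕜] [Fintype ι]
    [DecidableEq ι] [NormedAddCommGroup E] [NormedSpace 𝕜 E] {A : E → Matrix ι ι 𝕜} {x : E}
    (hA : ∀ i j, DifferentiableAt 𝕜 (fun x => A x i j) x) (v : E) :
    fderiv 𝕜 (fun x => (A x).det) x v =
      ∑ j, ((A x).updateCol j fun i => fderiv 𝕜 (fun x => A x i j) x v).det := by
  have hcol : ∀ j, HasFDerivAt (fun x i => A x i j) (fderiv 𝕜 (fun x i => A x i j) x) x :=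
    fun j => (differentiableAt_pi.2 fun i => hA i j).hasFDerivAt
  have hdet : (fun x => (A x).det) = fun x => detRowContinuousMultilinear fun j i => A x i j :=
    funext fun x => (det_transpose (A x)).symm
  rw [hdet, (HasFDerivAt.multilinear_comp detRowContinuousMultilinear hcol).fderiv, _root_.sum_apply]
  refine Finset.sum_congr rfl fun j _ => ?_
  rw [ContinuousLinearMap.comp_apply, ContinuousMultilinearMap.toContinuousLinearMap_apply,
    fderiv_pi fun i => hA i j, ← det_transpose, ← updateRow_transpose]
  rfl

theorem ContinuousLinearMap.apply_eq_sum_mul_single {ι R : Type*} [Fintype ι] [DecidableEq ι]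
    [Semiring R] [TopologicalSpace R] (L : (ι → R) →L[R] R) (v : ι → R) :
    L v = ∑ j, v j * L (Pi.single j 1) := by
  conv_lhs => rw [← Finset.univ_sum_single v]
  rw [map_sum]
  refine Finset.sum_congr rfl fun j _ => ?_
  rw [← smul_eq_mul, ← map_smul, ← Pi.single_smul', smul_eq_mul, mul_one]

section dopMatrix

variable {d n m : ℕ} (h : m + n = d + 2)
  (Φ : (Fin d → ℝ) → Fin n → ℝ) (φ : (Fin d → ℝ) → Fin m → ℝ)

noncomputable def dopMatrix (z : Fin n → ℝ) (y : Fin d → ℝ) :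
    Matrix (Fin (d + 2)) (Fin (d + 2)) ℝ :=
  Matrix.of fun r c =>
    Fin.addCases (motive := fun _ => ℝ)
      (fun i : Fin m =>
        Fin.cases (0 : ℝ)
          (fun c' : Fin (d + 1) =>
            Fin.cases (0 : ℝ)
              (fun j : Fin d => fderiv ℝ (fun y' => φ y' i) y (Pi.single j 1)) c') c)
      (fun i : Fin n =>
        Fin.cases (z i)
          (fun c' : Fin (d + 1) =>
            Fin.cases (Φ y i)
              (fun j : Fin d => fderiv ℝ (fun y' => Φ y' i) y (Pi.single j 1)) c') c)
      (Fin.cast h.symm r)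

theorem Dop_eq_det (y : Fin d → ℝ) (z : Fin n → ℝ) :
    Dop h Φ φ y z = (dopMatrix h Φ φ z y).det := rfl

theorem dopMatrix_col_zero_eq_col_one (y : Fin d → ℝ) (r : Fin (d + 2)) :
    dopMatrix h Φ φ (Φ y) y r 0 = dopMatrix h Φ φ (Φ y) y r 1 := by
  rw [← Fin.succ_zero_eq_one]
  simp only [dopMatrix, Matrix.of_apply, Fin.cases_zero, Fin.cases_succ]

theorem fderiv_dopMatrix_col_zero (z : Fin n → ℝ) (y : Fin d → ℝ) (r : Fin (d + 2)) :
    fderiv ℝ (fun x => dopMatrix h Φ φ z x r 0) y = 0 := by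
  simp only [dopMatrix, Matrix.of_apply]
  generalize Fin.cast h.symm r = ρ
  induction ρ using Fin.addCases <;> simp

theorem fderiv_dopMatrix_col_one_apply (z : Fin n → ℝ) {y v : Fin d → ℝ}
    (hφv : ∀ i, fderiv ℝ (fun x => φ x i) y v = 0) (r : Fin (d + 2)) :
    fderiv ℝ (fun x => dopMatrix h Φ φ z x r 1) y v =
      ∑ c, (Fin.cons 0 (Fin.cons 0 v) : Fin (d + 2) → ℝ) c • dopMatrix h Φ φ z y r c := by
  rw [← Fin.succ_zero_eq_one]
  simp only [Fin.sum_univ_succ, Fin.cons_zero, Fin.cons_succ, smul_eq_mul, zero_mul, zero_add]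
  simp only [dopMatrix, Matrix.of_apply, Fin.cases_zero, Fin.cases_succ]
  generalize Fin.cast h.symm r = ρ
  induction ρ using Fin.addCases with
  | left i => simp [← ContinuousLinearMap.apply_eq_sum_mul_single, hφv]
  | right i => simp [← ContinuousLinearMap.apply_eq_sum_mul_single]

theorem differentiableAt_dopMatrix (z : Fin n → ℝ) {y : Fin d → ℝ}
    (hΦ : ∀ i, DifferentiableAt ℝ (fun x => Φ x i) y)
    (hDΦ : ∀ i, DifferentiableAt ℝ (fderiv ℝ fun x => Φ x i) y)
    (hDφ : ∀ i, DifferentiableAt ℝ (fderiv ℝ fun x => φ x i) y) (r c : Fin (d + 2)) :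
    DifferentiableAt ℝ (fun x => dopMatrix h Φ φ z x r c) y := by
  simp only [dopMatrix, Matrix.of_apply]
  generalize Fin.cast h.symm r = ρ
  induction ρ using Fin.addCases with
  | left i =>
    simp only [Fin.addCases_left]
    cases c using Fin.cases with
    | zero => simp
    | succ c => cases c using Fin.cases with
      | zero => simpa only [Fin.cases_zero, Fin.cases_succ] using differentiableAt_const _
      | succ j =>
        simpa only [Fin.cases_succ] using (hDφ i).clm_apply (differentiableAt_const _)
  | right i =>
    simp only [Fin.addCases_right]
    cases c using Fin.cases with
    | zero => simp
    | succ c => cases c using Fin.cases with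
      | zero => simpa only [Fin.cases_zero, Fin.cases_succ] using hΦ i
      | succ j =>
        simpa only [Fin.cases_succ] using (hDΦ i).clm_apply (differentiableAt_const _)

end dopMatrix

theorem stmt_7_general (d n m : ℕ) (h : m + n = d + 2)
    (U : Set (Fin d → ℝ)) (hU : IsOpen U)
    (Φ : (Fin d → ℝ) → Fin n → ℝ) (φ : (Fin d → ℝ) → Fin m → ℝ)
    (hΦ : ∀ i, ContDiffOn ℝ 2 (fun y' => Φ y' i) U)
    (hφ : ∀ i, ContDiffOn ℝ 2 (fun y' => φ y' i) U)
    (Y : (Fin d → ℝ) → (Fin d → ℝ))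
    (hYφ : ∀ y ∈ U, ∀ j, fderiv ℝ (fun y' => φ y' j) y (Y y) = 0) :
    ∀ y ∈ U, fderiv ℝ (fun y' => Dop h Φ φ y' (Φ y)) y (Y y) = 0 := by
  intro y hy
  have hΦy i : ContDiffAt ℝ 2 (fun x => Φ x i) y := (hΦ i).contDiffAt (hU.mem_nhds hy)
  have hφy i : ContDiffAt ℝ 2 (fun x => φ x i) y := (hφ i).contDiffAt (hU.mem_nhds hy)
  have hA := differentiableAt_dopMatrix h Φ φ (Φ y)
    (fun i => (hΦy i).differentiableAt (by norm_num))
    (fun i => ((hΦy i).fderiv_right (m := 1) (by norm_num)).differentiableAt one_ne_zero)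
    (fun i => ((hφy i).fderiv_right (m := 1) (by norm_num)).differentiableAt one_ne_zero)
  set A := dopMatrix h Φ φ (Φ y)
  simp only [Dop_eq_det]
  rw [fderiv_matrix_det_apply hA, Fin.sum_univ_succ, Fin.sum_univ_succ, Fin.succ_zero_eq_one]
  have hconst : ((A y).updateCol 0 fun r => fderiv ℝ (fun x => A x r 0) y (Y y)).det = 0 :=
    det_eq_zero_of_column_eq_zero 0 fun r => by simp [A, fderiv_dopMatrix_col_zero]
  have hspan : ((A y).updateCol 1 fun r => fderiv ℝ (fun x => A x r 1) y (Y y)).det = 0 := by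
    simp only [A, fderiv_dopMatrix_col_one_apply h Φ φ (Φ y) (hYφ y hy), det_updateCol_sum]
    simp
  have hrepeat (j : Fin d) : ((A y).updateCol j.succ.succ
      fun r => fderiv ℝ (fun x => A x r j.succ.succ) y (Y y)).det = 0 :=
    det_zero_of_column_eq (i := 0) (j := 1) (by simp) fun r => by
      rw [updateCol_ne (Fin.succ_ne_zero _).symm, updateCol_ne (Fin.succ_succ_ne_one _).symm]
      exact dopMatrix_col_zero_eq_col_one h Φ φ y r
  simp [hconst, hspan, hrepeat]

/-- If the `C¹` vector field `Y` annihilates each `φ_j` on `U`, then the derivative of the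
functional-valued map `y ↦ DΦ(y)` along `Y`, paired with `Φ(y)`, vanishes:
`⟨Y(DΦ)(y), Φ(y)⟩ = 0` on `U`. -/
theorem stmt_7 (d n m : ℕ) (h : m + n = d + 2)
    (U : Set (Fin d → ℝ)) (hU : IsOpen U)
    (Φ : (Fin d → ℝ) → Fin n → ℝ) (φ : (Fin d → ℝ) → Fin m → ℝ)
    (hΦ : ∀ i, ContDiffOn ℝ 2 (fun y' => Φ y' i) U)
    (hφ : ∀ i, ContDiffOn ℝ 2 (fun y' => φ y' i) U)
    (Y : (Fin d → ℝ) → (Fin d → ℝ))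
    (hY : ∀ i, ContDiffOn ℝ 1 (fun y' => Y y' i) U)
    (hYφ : ∀ y ∈ U, ∀ j, fderiv ℝ (fun y' => φ y' j) y (Y y) = 0) :
    ∀ y ∈ U, fderiv ℝ (fun y' => Dop h Φ φ y' (Φ y)) y (Y y) = 0 :=
  stmt_7_general d n m h U hU Φ φ hΦ hφ Y hYφ
end
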